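/- Let V be a 4-dimensional vector space with Minkowski bilinear form η of signature (-,+,+,+), and let α, β be linearly independent covectors with η(α,β) = 0, η(α,α) > 0, and η(β,β) > 0. Then the restriction of η to the 2-dimensional subspace K = {v : α(v) = 0 and β(v) = 0} (the kernel of the 2-form α ∧ β) is a nondegenerate bilinear form of Lorentzian signature (-,+). -/

import Mathlib

/-!
Projecting the time axis `e₀` away from the orthogonal spacelike vectors `a`, `b` gives a
timelike `u ⊥ a, b`: removing spacelike components can only lower `η e₀ e₀ = -1`. The Hodge
dual of `a ∧ b ∧ u` is orthogonal to `a`, `b`, `u`, and its norm is minus the Gram determinant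
of `a, b, u`, hence positive. Normalising `u` and this vector gives `f₀`, `f₁`; then
`a, b, f₀, f₁` is an orthogonal family of non-null vectors in dimension 4, hence a basis, and
expanding `v ⊥ a, b` in it leaves only its `f₀`, `f₁` components.
-/

/-- The diagonal of the Minkowski metric of signature (-,+,+,+). -/
def minkSign : Fin 4 → ℝ := ![-1, 1, 1, 1]

/-- The Minkowski bilinear form on `Fin 4 → ℝ`. -/
def minkForm (x y : Fin 4 → ℝ) : ℝ := ∑ μ, minkSign μ * x μ * y μ

open LinearMap (BilinForm)

namespace LinearMap.BilinForm

variable {K V : Type*} [Field K] [AddCommGroup V] [Module K V]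

def projAway (B : BilinForm K V) (a b x : V) : V :=
  x - (B a x / B a a) • a - (B b x / B b b) • b

variable {B : BilinForm K V} {a b : V}

theorem apply_projAway_left (hab : B a b = 0) (ha : B a a ≠ 0) (x : V) :
    B a (B.projAway a b x) = 0 := by
  simp only [projAway, map_sub, map_smul, hab, smul_eq_mul]
  field_simp
  ring

theorem apply_projAway_right (hba : B b a = 0) (hb : B b b ≠ 0) (x : V) :
    B b (B.projAway a b x) = 0 := by
  simp only [projAway, map_sub, map_smul, hba, smul_eq_mul]
  field_simp
  ring

theorem projAway_apply_projAway (hB : B.IsSymm) (hab : B a b = 0) (ha : B a a ≠ 0)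
    (hb : B b b ≠ 0) (x : V) :
    B (B.projAway a b x) (B.projAway a b x) = B x x - B a x ^ 2 / B a a - B b x ^ 2 / B b b := by
  have hba : B b a = 0 := by rw [hB.eq, hab]
  have hp : B (B.projAway a b x) (B.projAway a b x) = B x (B.projAway a b x) := by
    nth_rw 1 [projAway]
    simp [apply_projAway_left hab ha, apply_projAway_right hba hb]
  rw [hp, projAway]
  simp only [map_sub, map_smul, smul_eq_mul, hB.eq x a, hB.eq x b]
  ring

theorem apply_inv_sqrt_smul_self {W : Type*} [AddCommGroup W] [Module ℝ W] {B : BilinForm ℝ W}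
    {c : ℝ} (hc : 0 < c) (x : W) :
    B ((√c)⁻¹ • x) ((√c)⁻¹ • x) = B x x / c := by
  simp only [map_smul, LinearMap.smul_apply, smul_eq_mul]
  rw [← mul_assoc, ← mul_inv, Real.mul_self_sqrt hc.le, inv_mul_eq_div]

theorem IsSymm.isOrthoᵢ_fin_four (hB : B.IsSymm) {p q r s : V} (hpq : B p q = 0)
    (hpr : B p r = 0) (hps : B p s = 0) (hqr : B q r = 0) (hqs : B q s = 0) (hrs : B r s = 0) :
    B.IsOrthoᵢ ![p, q, r, s] := by
  rw [LinearMap.isOrthoᵢ_def]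
  intro i j hij
  fin_cases i <;> fin_cases j <;> simp at hij ⊢ <;> first | assumption | rwa [hB.eq]

variable [FiniteDimensional K V] {ι : Type*} [Fintype ι]

theorem eq_sum_of_isOrthoᵢ {v : ι → V} (hv : B.IsOrthoᵢ v) (hvv : ∀ i, B (v i) (v i) ≠ 0)
    (hcard : Fintype.card ι = Module.finrank K V) (x : V) :
    x = ∑ i, (B (v i) x / B (v i) (v i)) • v i := by
  have hspan :=
    (LinearMap.linearIndependent_of_isOrthoᵢ hv hvv).span_eq_top_of_card_eq_finrank' hcard
  obtain ⟨c, rfl⟩ :=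
    (Submodule.mem_span_range_iff_exists_fun K).1 (hspan ▸ Submodule.mem_top (x := x))
  have hc : ∀ i, B (v i) (∑ j, c j • v j) = c i * B (v i) (v i) := fun i => by
    rw [map_sum, Finset.sum_eq_single i]
    · simp
    · intro j _ hji; simp [hv hji.symm]
    · simp
  congr 1
  funext i
  rw [hc, mul_div_cancel_right₀ _ (hvv i)]

end LinearMap.BilinForm

open LinearMap.BilinForm

theorem minkForm_expand (x y : Fin 4 → ℝ) :
    minkForm x y = -(x 0 * y 0) + x 1 * y 1 + x 2 * y 2 + x 3 * y 3 := by
  simp [minkForm, minkSign, Fin.sum_univ_four]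

def minkBilin : BilinForm ℝ (Fin 4 → ℝ) := Matrix.toBilin' (Matrix.diagonal minkSign)

local notation "η" => minkBilin

theorem minkBilin_apply (x y : Fin 4 → ℝ) : η x y = minkForm x y := by
  simp only [minkBilin, minkForm, Matrix.toBilin'_apply', dotProduct, Matrix.mulVec_diagonal]
  exact Finset.sum_congr rfl fun μ _ => by ring

theorem minkBilin_isSymm : minkBilin.IsSymm :=
  ⟨fun x y => by simp only [minkBilin_apply, minkForm_expand]; ring⟩

theorem minkBilin_single_zero : η (Pi.single 0 1) (Pi.single 0 1) = -1 := by
  simp [minkBilin, minkSign]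

/-- The metric dual of the Hodge dual `⋆(a ∧ b ∧ u)`. -/
def minkCross (a b u : Fin 4 → ℝ) : Fin 4 → ℝ := ![
  -(a 1*(b 2*u 3 - b 3*u 2) - a 2*(b 1*u 3 - b 3*u 1) + a 3*(b 1*u 2 - b 2*u 1)),
  -(a 0*(b 2*u 3 - b 3*u 2) - a 2*(b 0*u 3 - b 3*u 0) + a 3*(b 0*u 2 - b 2*u 0)),
  (a 0*(b 1*u 3 - b 3*u 1) - a 1*(b 0*u 3 - b 3*u 0) + a 3*(b 0*u 1 - b 1*u 0)),
  -(a 0*(b 1*u 2 - b 2*u 1) - a 1*(b 0*u 2 - b 2*u 0) + a 2*(b 0*u 1 - b 1*u 0))]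

theorem minkBilin_minkCross_first (a b u : Fin 4 → ℝ) : η a (minkCross a b u) = 0 := by
  simp [minkBilin_apply, minkForm_expand, minkCross]; ring

theorem minkBilin_minkCross_second (a b u : Fin 4 → ℝ) : η b (minkCross a b u) = 0 := by
  simp [minkBilin_apply, minkForm_expand, minkCross]; ring

theorem minkBilin_minkCross_third (a b u : Fin 4 → ℝ) : η u (minkCross a b u) = 0 := by
  simp [minkBilin_apply, minkForm_expand, minkCross]; ring

theorem minkBilin_minkCross_self (a b u : Fin 4 → ℝ) :
    η (minkCross a b u) (minkCross a b u) =
      -(η a a * η b b * η u u - η a a * η b u ^ 2 - η b b * η a u ^ 2 - η u u * η a b ^ 2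
        + 2 * η a b * η a u * η b u) := by
  simp [minkBilin_apply, minkForm_expand, minkCross]; ring

theorem minkBilin_minkCross_self_pos {a b u : Fin 4 → ℝ} (hab : η a b = 0) (hau : η a u = 0)
    (hbu : η b u = 0) (ha : 0 < η a a) (hb : 0 < η b b) (hu : η u u < 0) :
    0 < η (minkCross a b u) (minkCross a b u) := by
  rw [minkBilin_minkCross_self, hab, hau, hbu]
  nlinarith [mul_pos (mul_pos ha hb) (neg_pos.2 hu)]

theorem exists_timelike_orthogonal {a b : Fin 4 → ℝ} (hab : η a b = 0) (ha : 0 < η a a)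
    (hb : 0 < η b b) : ∃ u, η a u = 0 ∧ η b u = 0 ∧ η u u < 0 := by
  have hba : η b a = 0 := by rw [minkBilin_isSymm.eq, hab]
  refine ⟨projAway η a b (Pi.single 0 1), apply_projAway_left hab ha.ne' _,
    apply_projAway_right hba hb.ne' _, ?_⟩
  rw [projAway_apply_projAway minkBilin_isSymm hab ha.ne' hb.ne', minkBilin_single_zero]
  have := div_nonneg (sq_nonneg (η a (Pi.single 0 1))) ha.le
  have := div_nonneg (sq_nonneg (η b (Pi.single 0 1))) hb.le
  linarith

theorem stmt3_general (a b : Fin 4 → ℝ)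
    (hab : minkForm a b = 0)
    (ha : 0 < minkForm a a)
    (hb : 0 < minkForm b b) :
    ∃ f₀ f₁ : Fin 4 → ℝ,
      (minkForm a f₀ = 0 ∧ minkForm b f₀ = 0) ∧
      (minkForm a f₁ = 0 ∧ minkForm b f₁ = 0) ∧
      minkForm f₀ f₀ = -1 ∧ minkForm f₁ f₁ = 1 ∧ minkForm f₀ f₁ = 0 ∧
      ∀ v : Fin 4 → ℝ, minkForm a v = 0 → minkForm b v = 0 →
        ∃ c d : ℝ, v = c • f₀ + d • f₁ := by
  simp only [← minkBilin_apply] at hab ha hb ⊢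
  obtain ⟨u, hau, hbu, huu⟩ := exists_timelike_orthogonal hab ha hb
  set w := minkCross a b u
  have hww : 0 < η w w := minkBilin_minkCross_self_pos hab hau hbu ha hb huu
  set f₀ := (√(-η u u))⁻¹ • u
  set f₁ := (√(η w w))⁻¹ • w
  have hf₀ : η f₀ f₀ = -1 := by
    rw [apply_inv_sqrt_smul_self (neg_pos.2 huu), div_neg, div_self huu.ne]
  have hf₁ : η f₁ f₁ = 1 := by rw [apply_inv_sqrt_smul_self hww, div_self hww.ne']
  have haf₀ : η a f₀ = 0 := by simp [f₀, hau]
  have hbf₀ : η b f₀ = 0 := by simp [f₀, hbu]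
  have haf₁ : η a f₁ = 0 := by simp [f₁, w, minkBilin_minkCross_first]
  have hbf₁ : η b f₁ = 0 := by simp [f₁, w, minkBilin_minkCross_second]
  have hf₀f₁ : η f₀ f₁ = 0 := by simp [f₀, f₁, w, minkBilin_minkCross_third]
  refine ⟨f₀, f₁, ⟨haf₀, hbf₀⟩, ⟨haf₁, hbf₁⟩, hf₀, hf₁, hf₀f₁, fun v hav hbv => ?_⟩
  have hortho := minkBilin_isSymm.isOrthoᵢ_fin_four hab haf₀ haf₁ hbf₀ hbf₁ hf₀f₁
  have hv := eq_sum_of_isOrthoᵢ hortho (by simp [Fin.forall_fin_succ, ha.ne', hb.ne', hf₀, hf₁])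
    (by simp) v
  exact ⟨_, _, by simpa [Fin.sum_univ_four, hav, hbv, hf₀, hf₁] using hv⟩

/-- Let `a`, `b` be the metric duals of two linearly independent
covectors `α`, `β` with `η(α,β) = 0`, `η(α,α) > 0`, `η(β,β) > 0`.  Then the
restriction of `η` to the kernel `K = {v : α(v) = 0, β(v) = 0}` of the 2-form
`α ∧ β` is a nondegenerate form of Lorentzian signature `(-,+)`: there is a
basis `f₀, f₁` of `K` with `η(f₀,f₀) = -1`, `η(f₁,f₁) = 1`, `η(f₀,f₁) = 0`. -/
theorem stmt3 (a b : Fin 4 → ℝ)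
    (hind : LinearIndependent ℝ ![a, b])
    (hab : minkForm a b = 0)
    (ha : 0 < minkForm a a)
    (hb : 0 < minkForm b b) :
    ∃ f₀ f₁ : Fin 4 → ℝ,
      (minkForm a f₀ = 0 ∧ minkForm b f₀ = 0) ∧
      (minkForm a f₁ = 0 ∧ minkForm b f₁ = 0) ∧
      minkForm f₀ f₀ = -1 ∧ minkForm f₁ f₁ = 1 ∧ minkForm f₀ f₁ = 0 ∧
      ∀ v : Fin 4 → ℝ, minkForm a v = 0 → minkForm b v = 0 →
        ∃ c d : ℝ, v = c • f₀ + d • f₁ :=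
  stmt3_general a b hab ha hb
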